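/- Consider the overflow network (α, μ, P, Q) and suppose (α, μ, P) is non-isolated with λ* the unique nonnegative solution of λ* = α + (λ* ∧ μ)P. If λ is any solution of the overflow traffic equation λ = α + (λ ∧ μ)P + (λ − μ)⁺ Q, then λ ≥ λ* ≥ 0 entrywise. -/

import Mathlib

open scoped Classical

/-- `i` and `j` communicate under the nonnegative matrix `P`. -/
def Communicates {n : ℕ} (P : Matrix (Fin n) (Fin n) ℝ) (i j : Fin n) : Prop :=
  i = j ∨ ((∃ k ≥ 1, 0 < (P ^ k) i j) ∧ (∃ l ≥ 1, 0 < (P ^ l) j i))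

/-- `C` is a communicating class of `P`. -/
def IsCommClass {n : ℕ} (P : Matrix (Fin n) (Fin n) ℝ) (C : Set (Fin n)) : Prop :=
  ∃ i, C = {j | Communicates P i j}

/-- The class `C` can be filled: exogenous input reaches it directly or
through routing. -/
def CanBeFilled {n : ℕ} (α : Fin n → ℝ) (P : Matrix (Fin n) (Fin n) ℝ)
    (C : Set (Fin n)) : Prop :=
  (∃ i ∈ C, 0 < α i) ∨ (∃ j, 0 < α j ∧ ∃ l ∈ C, ∃ k ≥ 1, 0 < (P ^ k) j l)

/-- The class `C` can be drained: externally (a row sum in `C` is `< 1`) or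
internally (positive routing out of `C`). -/
def CanBeDrained {n : ℕ} (P : Matrix (Fin n) (Fin n) ℝ) (C : Set (Fin n)) : Prop :=
  (∃ i ∈ C, ∑ j, P i j < 1) ∨ (∃ i ∈ C, ∃ j ∉ C, 0 < P i j)

/-- The network `(α, μ, P)` is non-isolated (NI): every communicating class of
`P` can be filled or drained. -/
def NI {n : ℕ} (α : Fin n → ℝ) (P : Matrix (Fin n) (Fin n) ℝ) : Prop :=
  ∀ C, IsCommClass P C → CanBeFilled α P C ∨ CanBeDrained P C

/-!
Write `m(z)ᵢ = min(zᵢ, μᵢ)`. Since the overflow term `(λ − μ)⁺Q` is nonnegative, `λ` is a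
supersolution `λ ≥ α + m(λ)P` of the non-overflow traffic equation, so it suffices that every
supersolution `y` dominates the nonnegative solution `x = λ*`.

On the deficit set `S = {y < x}` the surplus `x − y` is pushed by `P` at most as
`(m(x) − m(y))P`, and `m(x) − m(y) ≤ x − y` on `S`, `≤ 0` off `S`. Summing over `S` forces
equality: `S` is closed, `P` is stochastic on `S` and `x ≤ μ` there. A closed communicating class
`C ⊆ S` is then not drainable, so by NI it can be filled. But flow balance for `x` on
`C ∪ {x = 0}` shows that this set receives neither exogenous input nor flow from outside, so no
input ever reaches `C`.
-/

open Finset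
open scoped Matrix

section Reachability

variable {ι : Type*}

def IsClosedUnder (P : Matrix ι ι ℝ) (S : Set ι) : Prop :=
  ∀ i ∈ S, ∀ j, 0 < P i j → j ∈ S

variable [Fintype ι] [DecidableEq ι] {P : Matrix ι ι ℝ}

theorem IsClosedUnder.mem_of_pow_apply_pos (hP : ∀ i j, 0 ≤ P i j) {S : Set ι}
    (hS : IsClosedUnder P S) (k : ℕ) {i j : ι} (hi : i ∈ S) (hij : 0 < (P ^ k) i j) : j ∈ S := by
  induction k generalizing i with
  | zero =>
    rcases eq_or_ne i j with rfl | hne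
    · exact hi
    · simp [Matrix.one_apply_ne hne] at hij
  | succ k ih =>
    rw [pow_succ', Matrix.mul_apply, sum_pos_iff_of_nonneg fun m _ =>
      mul_nonneg (hP i m) (Matrix.pow_apply_nonneg hP k m j)] at hij
    obtain ⟨m, -, hm⟩ := hij
    exact ih (hS i hi m (pos_of_mul_pos_left hm (Matrix.pow_apply_nonneg hP k m j)))
      (pos_of_mul_pos_right hm (hP i m))

def Reaches (P : Matrix ι ι ℝ) (i j : ι) : Prop :=
  ∃ k ≥ 1, 0 < (P ^ k) i j

theorem Reaches.of_pos {i j : ι} (h : 0 < P i j) : Reaches P i j :=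
  ⟨1, le_rfl, by simpa using h⟩

theorem Reaches.trans (hP : ∀ i j, 0 ≤ P i j) {i j l : ι} (hij : Reaches P i j)
    (hjl : Reaches P j l) : Reaches P i l := by
  obtain ⟨k, hk, hk_pos⟩ := hij
  obtain ⟨k', -, hk'_pos⟩ := hjl
  refine ⟨k + k', le_add_right hk, ?_⟩
  rw [pow_add, Matrix.mul_apply, sum_pos_iff_of_nonneg fun m _ =>
    mul_nonneg (Matrix.pow_apply_nonneg hP k i m) (Matrix.pow_apply_nonneg hP k' m l)]
  exact ⟨j, mem_univ j, mul_pos hk_pos hk'_pos⟩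

theorem IsClosedUnder.mem_of_reaches (hP : ∀ i j, 0 ≤ P i j) {S : Set ι}
    (hS : IsClosedUnder P S) {i j : ι} (hi : i ∈ S) (hij : Reaches P i j) : j ∈ S :=
  let ⟨k, _, hk⟩ := hij
  hS.mem_of_pow_apply_pos hP k hi hk

end Reachability

theorem sum_eq_one_and_eq_zero_of_sum_eq_one {ι : Type*} [Fintype ι] [DecidableEq ι]
    {p : ι → ℝ} (hp : ∀ i, 0 ≤ p i) (hle : ∑ i, p i ≤ 1) {S : Finset ι}
    (hS : ∑ i ∈ S, p i = 1) : ∑ i, p i = 1 ∧ ∀ i ∉ S, p i = 0 := by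
  have hsplit := sum_add_sum_compl S p
  have hcompl : ∑ i ∈ Sᶜ, p i = 0 :=
    le_antisymm (by linarith) (sum_nonneg fun i _ => hp i)
  refine ⟨by linarith, fun i hi => ?_⟩
  exact (sum_eq_zero_iff_of_nonneg fun i _ => hp i).1 hcompl i (mem_compl.2 hi)

theorem min_sub_min_le_sub {a b : ℝ} (c : ℝ) (hab : a ≤ b) : min b c - min a c ≤ b - a := by
  simp only [min_def]
  split_ifs <;> linarith

theorem min_sub_min_mul_le {a b c s : ℝ} (hab : a ≤ b) (hs₀ : 0 ≤ s) (hs₁ : s ≤ 1) :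
    (min b c - min a c) * s ≤ b - a := by
  nlinarith [sub_nonneg.2 (min_le_min_right c hab), min_sub_min_le_sub c hab]

theorem eq_one_and_le_of_min_sub_min_mul_eq {a b c s : ℝ} (hab : a < b) (hs₀ : 0 ≤ s)
    (hs₁ : s ≤ 1) (h : (min b c - min a c) * s = b - a) : s = 1 ∧ b ≤ c := by
  obtain rfl : s = 1 := by
    nlinarith [sub_nonneg.2 (min_le_min_right c hab.le), min_sub_min_le_sub c hab.le]
  refine ⟨rfl, ?_⟩
  simp only [min_def] at h
  split_ifs at h <;> linarith

section Traffic

variable {ι : Type*} [Fintype ι]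

def IsTrafficSolution (α μ : ι → ℝ) (P : Matrix ι ι ℝ) (x : ι → ℝ) : Prop :=
  ∀ i, x i = α i + ∑ j, min (x j) (μ j) * P j i

def IsTrafficSupersolution (α μ : ι → ℝ) (P : Matrix ι ι ℝ) (y : ι → ℝ) : Prop :=
  ∀ i, α i + ∑ j, min (y j) (μ j) * P j i ≤ y i

variable {α μ x y : ι → ℝ} {P : Matrix ι ι ℝ}

theorem IsTrafficSolution.sum_deficit_eq_one_and_le (hP : ∀ i j, 0 ≤ P i j)
    (hPsub : ∀ i, ∑ j, P i j ≤ 1) (hx : IsTrafficSolution α μ P x)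
    (hy : IsTrafficSupersolution α μ P y) {j : ι} (hj : y j < x j) :
    ∑ i ∈ univ.filter (fun i => y i < x i), P j i = 1 ∧ x j ≤ μ j := by
  set S := univ.filter (fun i => y i < x i)
  set g : ι → ℝ := fun j => min (x j) (μ j) - min (y j) (μ j)
  set s : ι → ℝ := fun j => ∑ i ∈ S, P j i
  have hs₀ : ∀ j, 0 ≤ s j := fun j => sum_nonneg fun i _ => hP j i
  have hs₁ : ∀ j, s j ≤ 1 := fun j =>
    (sum_le_sum_of_subset_of_nonneg (subset_univ S) fun i _ _ => hP j i).trans (hPsub j)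
  have hgs : ∀ j ∈ S, g j * s j ≤ x j - y j := fun j hj =>
    min_sub_min_mul_le (mem_filter.1 hj).2.le (hs₀ j) (hs₁ j)
  have hg_off : ∀ j ∈ Sᶜ, g j * s j ≤ 0 := fun j hj => by
    have hyx : x j ≤ y j := not_lt.1 fun h => mem_compl.1 hj (mem_filter.2 ⟨mem_univ j, h⟩)
    exact mul_nonpos_of_nonpos_of_nonneg (sub_nonpos.2 (min_le_min_right _ hyx)) (hs₀ j)
  have hsum : ∑ j ∈ S, (x j - y j) ≤ ∑ j ∈ S, g j * s j :=
    calc ∑ i ∈ S, (x i - y i)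
        ≤ ∑ i ∈ S, ∑ j, g j * P j i := sum_le_sum fun i _ => by
          simp only [g, sub_mul, sum_sub_distrib]
          linarith [hx i, hy i]
      _ = ∑ j, g j * s j := by
          rw [sum_comm]
          simp only [s, mul_sum]
      _ = ∑ j ∈ S, g j * s j + ∑ j ∈ Sᶜ, g j * s j := (sum_add_sum_compl S _).symm
      _ ≤ ∑ j ∈ S, g j * s j := by linarith [sum_nonpos hg_off]
  have hjS : j ∈ S := mem_filter.2 ⟨mem_univ j, hj⟩
  have heq := (sum_eq_sum_iff_of_le hgs).1 (le_antisymm (sum_le_sum hgs) hsum) j hjS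
  exact eq_one_and_le_of_min_sub_min_mul_eq hj (hs₀ j) (hs₁ j) heq

theorem IsTrafficSolution.deficit_isClosedUnder_and_stochastic (hP : ∀ i j, 0 ≤ P i j)
    (hPsub : ∀ i, ∑ j, P i j ≤ 1) (hx : IsTrafficSolution α μ P x)
    (hy : IsTrafficSupersolution α μ P y) :
    IsClosedUnder P {i | y i < x i} ∧ ∀ j, y j < x j → ∑ i, P j i = 1 ∧ x j ≤ μ j := by
  have hrow j (hj : y j < x j) := sum_eq_one_and_eq_zero_of_sum_eq_one (hP j) (hPsub j)
    (hx.sum_deficit_eq_one_and_le hP hPsub hy hj).1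
  refine ⟨fun j hj i hji => ?_, fun j hj =>
    ⟨(hrow j hj).1, (hx.sum_deficit_eq_one_and_le hP hPsub hy hj).2⟩⟩
  by_contra hi
  exact hji.ne' ((hrow j hj).2 i (by simpa using hi))

theorem no_inflow_of_le_retained {m : ι → ℝ} (hα : ∀ i, 0 ≤ α i) (hm : ∀ j, 0 ≤ m j)
    (hP : ∀ i j, 0 ≤ P i j) (hx : ∀ i, x i = α i + ∑ j, m j * P j i) {T : Finset ι}
    (hT : ∀ j ∈ T, x j ≤ m j * ∑ i ∈ T, P j i) :
    (∀ i ∈ T, α i = 0) ∧ ∀ j ∉ T, ∀ i ∈ T, 0 < P j i → m j = 0 := by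
  have hbal : ∑ i ∈ T, x i = ∑ i ∈ T, α i + ∑ j, m j * ∑ i ∈ T, P j i := by
    simp only [hx, sum_add_distrib, mul_sum]
    rw [sum_comm]
  have hout_nonneg : ∀ j ∈ Tᶜ, 0 ≤ m j * ∑ i ∈ T, P j i := fun j _ =>
    mul_nonneg (hm j) (sum_nonneg fun i _ => hP j i)
  have hα_nonneg : ∀ i ∈ T, 0 ≤ α i := fun i _ => hα i
  rw [← sum_add_sum_compl T] at hbal
  have hin := sum_le_sum hT
  have hα_zero : ∑ i ∈ T, α i = 0 :=
    le_antisymm (by linarith [sum_nonneg hout_nonneg]) (sum_nonneg hα_nonneg)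
  have hout_zero : ∑ j ∈ Tᶜ, m j * ∑ i ∈ T, P j i = 0 :=
    le_antisymm (by linarith [sum_nonneg hα_nonneg]) (sum_nonneg hout_nonneg)
  refine ⟨(sum_eq_zero_iff_of_nonneg hα_nonneg).1 hα_zero, fun j hj i hi hji => ?_⟩
  have hprod := (sum_eq_zero_iff_of_nonneg hout_nonneg).1 hout_zero j (mem_compl.2 hj)
  have hrow : 0 < ∑ i ∈ T, P j i := hji.trans_le (single_le_sum (fun i _ => hP j i) hi)
  exact (mul_eq_zero.1 hprod).resolve_right hrow.ne'

end Traffic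

section Network

variable {n : ℕ} {α μ x : Fin n → ℝ} {P : Matrix (Fin n) (Fin n) ℝ}

theorem exists_isCommClass_subset (hP : ∀ i j, 0 ≤ P i j) {S : Set (Fin n)}
    (hS : IsClosedUnder P S) (hne : S.Nonempty) :
    ∃ C, IsCommClass P C ∧ C ⊆ S ∧ IsClosedUnder P C := by
  let reach (j : Fin n) : Finset (Fin n) := univ.filter fun l => j = l ∨ Reaches P j l
  obtain ⟨i₀, hi₀, hmin⟩ := S.exists_min_image (fun j => (reach j).card) S.toFinite hne
  -- `i₀` has a minimal reachable set, so whatever it reaches leads back to it.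
  have hback : ∀ j, Reaches P i₀ j → Reaches P j i₀ := by
    intro j hj
    have hsub : reach j ⊆ reach i₀ := fun l hl => by
      simp only [reach, mem_filter, mem_univ, true_and] at hl ⊢
      rcases hl with rfl | hjl
      exacts [Or.inr hj, Or.inr (hj.trans hP hjl)]
    have hi₀j : i₀ ∈ reach j := by
      rw [eq_of_subset_of_card_le hsub (hmin j (hS.mem_of_reaches hP hi₀ hj))]
      simp [reach]
    simp only [reach, mem_filter, mem_univ, true_and] at hi₀j
    rcases hi₀j with rfl | h
    exacts [hj, h]
  refine ⟨{j | Communicates P i₀ j}, ⟨i₀, rfl⟩, ?_, ?_⟩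
  · rintro j (rfl | ⟨hj, -⟩)
    exacts [hi₀, hS.mem_of_reaches hP hi₀ hj]
  · intro j hj l hjl
    have hl : Reaches P i₀ l := by
      rcases hj with rfl | ⟨hj, -⟩
      exacts [.of_pos hjl, Reaches.trans hP hj (.of_pos hjl)]
    exact Or.inr ⟨hl, hback l hl⟩

theorem not_canBeDrained {C : Set (Fin n)} (hC : IsClosedUnder P C)
    (hrow : ∀ i ∈ C, ∑ j, P i j = 1) : ¬ CanBeDrained P C := by
  rintro (⟨i, hi, hlt⟩ | ⟨i, hi, j, hj, hij⟩)
  · exact hlt.ne (hrow i hi)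
  · exact hj (hC i hi j hij)

theorem IsTrafficSolution.not_canBeFilled (hα : ∀ i, 0 ≤ α i) (hμ : ∀ i, 0 < μ i)
    (hP : ∀ i j, 0 ≤ P i j) (hx₀ : ∀ i, 0 ≤ x i) (hx : IsTrafficSolution α μ P x)
    {C : Set (Fin n)} (hC : IsClosedUnder P C) (hrow : ∀ i ∈ C, ∑ j, P i j = 1)
    (hcap : ∀ i ∈ C, x i ≤ μ i) : ¬ CanBeFilled α P C := by
  set T : Finset (Fin n) := univ.filter fun i => i ∈ C ∨ x i = 0
  have hmemT {i} : i ∈ T ↔ i ∈ C ∨ x i = 0 := by simp [T]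
  have hretained : ∀ j ∈ T, x j ≤ min (x j) (μ j) * ∑ i ∈ T, P j i := by
    intro j hj
    rcases hmemT.1 hj with hjC | hj0
    · have hrowT : ∑ i ∈ T, P j i = 1 := by
        rw [← hrow j hjC]
        refine sum_subset (subset_univ T) fun i _ hi => ?_
        by_contra hji
        exact hi (hmemT.2 (Or.inl (hC j hjC i ((hP j i).lt_of_ne' hji))))
      rw [hrowT, mul_one, min_eq_left (hcap j hjC)]
    · rw [hj0]
      exact mul_nonneg (le_min le_rfl (hμ j).le) (sum_nonneg fun i _ => hP j i)
  obtain ⟨hαT, hinT⟩ := no_inflow_of_le_retained hα (fun j => le_min (hx₀ j) (hμ j).le) hP hx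
    hretained
  -- Reversing the arrows, `T` is closed: a predecessor outside `T` would have `x = 0`.
  have hTclosed : IsClosedUnder Pᵀ {i | i ∈ T} := by
    intro i hi j hij
    by_contra hj
    have hmin := hinT j hj i hi hij
    rcases min_choice (x j) (μ j) with h | h
    · exact hj (hmemT.2 (Or.inr (h ▸ hmin)))
    · exact (hμ j).ne' (h ▸ hmin)
  have hreachT {j l : Fin n} (k : ℕ) (hl : l ∈ C) (hk : 0 < (P ^ k) j l) : α j = 0 := by
    refine hαT j (hTclosed.mem_of_pow_apply_pos (P := Pᵀ) (fun i j => hP j i) k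
      (hmemT.2 (Or.inl hl)) ?_)
    rwa [← Matrix.transpose_pow]
  rintro (⟨i, hi, hαi⟩ | ⟨j, hαj, l, hl, k, -, hk⟩)
  · exact hαi.ne' (hreachT 0 hi (by simp))
  · exact hαj.ne' (hreachT k hl hk)

theorem IsTrafficSolution.le_of_isTrafficSupersolution (hα : ∀ i, 0 ≤ α i)
    (hμ : ∀ i, 0 < μ i) (hP : ∀ i j, 0 ≤ P i j) (hPsub : ∀ i, ∑ j, P i j ≤ 1) (hNI : NI α P)
    (hx₀ : ∀ i, 0 ≤ x i) (hx : IsTrafficSolution α μ P x) {y : Fin n → ℝ}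
    (hy : IsTrafficSupersolution α μ P y) : ∀ i, x i ≤ y i := by
  by_contra! ⟨i, hi⟩
  obtain ⟨hS, hrowS⟩ := hx.deficit_isClosedUnder_and_stochastic hP hPsub hy
  obtain ⟨C, hCcls, hCS, hC⟩ := exists_isCommClass_subset hP hS ⟨i, hi⟩
  have hrow : ∀ j ∈ C, ∑ i, P j i = 1 := fun j hj => (hrowS j (hCS hj)).1
  have hfill := (hNI C hCcls).resolve_right (not_canBeDrained hC hrow)
  exact hx.not_canBeFilled hα hμ hP hx₀ hC hrow (fun j hj => (hrowS j (hCS hj)).2) hfill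

end Network

theorem overflow_solution_dominates_general (n : ℕ)
    (α μ lamStar lam : Fin n → ℝ) (P Q : Matrix (Fin n) (Fin n) ℝ)
    (hα : ∀ i, 0 ≤ α i) (hμ : ∀ i, 0 < μ i)
    (hP : ∀ i j, 0 ≤ P i j) (hPsub : ∀ i, ∑ j, P i j ≤ 1)
    (hQ : ∀ i j, 0 ≤ Q i j)
    (hNI : NI α P)
    (hstar_nonneg : ∀ i, 0 ≤ lamStar i)
    (hstar : ∀ i, lamStar i = α i + ∑ j, min (lamStar j) (μ j) * P j i)
    (heq : ∀ i, lam i = α i + ∑ j, min (lam j) (μ j) * P j i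
      + ∑ j, max (lam j - μ j) 0 * Q j i) :
    ∀ i, lamStar i ≤ lam i := by
  have hlam : IsTrafficSupersolution α μ P lam := fun i => by
    have hoverflow : 0 ≤ ∑ j, max (lam j - μ j) 0 * Q j i :=
      sum_nonneg fun j _ => mul_nonneg (le_max_right _ _) (hQ j i)
    linarith [heq i]
  exact IsTrafficSolution.le_of_isTrafficSupersolution hα hμ hP hPsub hNI hstar_nonneg hstar hlam

/-- any solution of the overflow traffic equation dominates the
(nonnegative) solution of the non-overflow traffic equation. -/
theorem overflow_solution_dominates (n : ℕ)
    (α μ lamStar lam : Fin n → ℝ) (P Q : Matrix (Fin n) (Fin n) ℝ)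
    (hα : ∀ i, 0 ≤ α i) (hμ : ∀ i, 0 < μ i)
    (hP : ∀ i j, 0 ≤ P i j) (hPsub : ∀ i, ∑ j, P i j ≤ 1)
    (hQ : ∀ i j, 0 ≤ Q i j) (hQsub : ∀ i, ∑ j, Q i j ≤ 1)
    (hNI : NI α P)
    (hstar_nonneg : ∀ i, 0 ≤ lamStar i)
    (hstar : ∀ i, lamStar i = α i + ∑ j, min (lamStar j) (μ j) * P j i)
    (heq : ∀ i, lam i = α i + ∑ j, min (lam j) (μ j) * P j i
      + ∑ j, max (lam j - μ j) 0 * Q j i) :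
    ∀ i, lamStar i ≤ lam i :=
  overflow_solution_dominates_general n α μ lamStar lam P Q hα hμ hP hPsub hQ hNI hstar_nonneg hstar
    heq
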